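/- Let T ∈ ℂ^{N_T×N_T} be Hermitian positive semidefinite with rank r, let λ > 0, let N_S ≥ r be a positive integer, and let δ ≥ 0 satisfy the fixed-point equation δ = (1/N_S)·tr(T·(I_{N_T} + (λ/(1+λδ))·T)^{-1}). Then ρ̄(λ,T,N_S,δ) ≥ ((N_S − r)/N_S)·log det(I_{N_T} + λ·T), where ρ̄(λ,T,N_S,δ) = log det(I_{N_T} + (λ/(1+λδ))T) + N_S·log(1+λδ) − N_S·λδ/(1+λδ). -/

import Mathlib

/-!
Diagonalising `T` reduces everything to its eigenvalues `e i ≥ 0`, of which `r` are nonzero.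
Put `p = 1 + λδ`, `μ = λ / p`, `S = log det (I + μT)` and `L = log det (I + λT)`, so that
`ρ̄ = S + N_S (log p - λδ / p)`. Since `(1 + μ e) p ≥ 1 + λ e`, we get `L ≤ S + r log p`.
By the fixed-point equation `N_S λδ / p = ∑ μ e i / (1 + μ e i)`, and `x / (1 + x) ≤ log (1 + x)`
bounds this by `S`; the same inequality gives `λδ / p ≤ log p`. Combining,
`N_S ρ̄ - (N_S - r) L ≥ N_S (N_S - r) (log p - λδ / p) + r² log p ≥ 0`.
-/

open Matrix
open scoped ComplexOrder

/-- The fixed-point equation `δ = (1/N_S)·tr(T·(I + (ρ/(1+ρδ))·T)⁻¹)`. -/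
def FixedPointEq {n : ℕ} (T : Matrix (Fin n) (Fin n) ℂ) (ρ : ℝ) (NS : ℕ) (δ : ℝ) : Prop :=
  (δ : ℂ) = (NS : ℂ)⁻¹ * (T * (1 + ((ρ / (1 + ρ * δ) : ℝ) : ℂ) • T)⁻¹).trace

/-- `ρ̄(λ,T,N_S,δ)`, the closed-form per-eigenvalue sensing mutual information (eq. (7)). -/
noncomputable def rhoBar {n : ℕ} (lam : ℝ) (T : Matrix (Fin n) (Fin n) ℂ)
    (NS : ℕ) (δ : ℝ) : ℝ :=
  Real.log ((1 + ((lam / (1 + lam * δ) : ℝ) : ℂ) • T).det.re)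
    + (NS : ℝ) * Real.log (1 + lam * δ) - (NS : ℝ) * (lam * δ / (1 + lam * δ))

open Finset Real

namespace Matrix.IsHermitian

variable {n 𝕜 : Type*} [RCLike 𝕜] [Fintype n] [DecidableEq n] {A : Matrix n n 𝕜}

lemma det_cfc (hA : A.IsHermitian) (f : ℝ → ℝ) :
    (cfc f A).det = ∏ i, (f (hA.eigenvalues i) : 𝕜) := by
  simp [hA.cfc_eq, IsHermitian.cfc, -Unitary.conjStarAlgAut_apply]

lemma trace_cfc (hA : A.IsHermitian) (f : ℝ → ℝ) :
    (cfc f A).trace = ∑ i, (f (hA.eigenvalues i) : 𝕜) := by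
  rw [hA.cfc_eq, IsHermitian.cfc, Unitary.conjStarAlgAut_apply, trace_mul_cycle,
    Unitary.coe_star_mul_self, one_mul, trace_diagonal]
  rfl

lemma one_add_smul_eq_cfc (hA : A.IsHermitian) (c : ℝ) :
    1 + c • A = cfc (fun x ↦ 1 + c * x) A := by
  have : IsSelfAdjoint A := hA
  rw [cfc_const_add 1 (c * ·) A, cfc_const_mul_id c A, Algebra.algebraMap_eq_smul_one, one_smul]

lemma mul_inv_one_add_smul_eq_cfc (hA : A.IsHermitian) (c : ℝ)
    (hc : ∀ i, 1 + c * hA.eigenvalues i ≠ 0) :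
    A * (1 + c • A)⁻¹ = cfc (fun x ↦ x / (1 + c * x)) A := by
  have : IsSelfAdjoint A := hA
  have hspec : ∀ x ∈ spectrum ℝ A, 1 + c * x ≠ 0 := by
    rw [hA.spectrum_real_eq_range_eigenvalues]
    rintro _ ⟨i, rfl⟩
    exact hc i
  have hfin : (spectrum ℝ A).Finite := by
    rw [hA.spectrum_real_eq_range_eigenvalues]
    exact Set.finite_range _
  simp_rw [div_eq_mul_inv]
  rw [cfc_mul (fun x ↦ x) (fun x ↦ (1 + c * x)⁻¹) A (hfin.continuousOn _) (hfin.continuousOn _),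
    cfc_inv (fun x ↦ 1 + c * x) A hspec, cfc_id' ℝ A, one_add_smul_eq_cfc hA,
    nonsing_inv_eq_ringInverse]

lemma det_one_add_smul (hA : A.IsHermitian) (c : ℝ) :
    (1 + c • A).det = ((∏ i, (1 + c * hA.eigenvalues i) : ℝ) : 𝕜) := by
  rw [one_add_smul_eq_cfc hA, det_cfc hA, RCLike.ofReal_prod]

lemma trace_mul_inv_one_add_smul (hA : A.IsHermitian) (c : ℝ)
    (hc : ∀ i, 1 + c * hA.eigenvalues i ≠ 0) :
    (A * (1 + c • A)⁻¹).trace =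
      ((∑ i, hA.eigenvalues i / (1 + c * hA.eigenvalues i) : ℝ) : 𝕜) := by
  rw [mul_inv_one_add_smul_eq_cfc hA c hc, trace_cfc hA, RCLike.ofReal_sum]

end Matrix.IsHermitian

namespace Matrix.PosSemidef

variable {n : Type*} [Fintype n] [DecidableEq n]

lemma one_add_mul_eigenvalues_pos {𝕜 : Type*} [RCLike 𝕜] {A : Matrix n n 𝕜} (hA : A.PosSemidef)
    {c : ℝ} (hc : 0 ≤ c) (i : n) : 0 < 1 + c * hA.1.eigenvalues i :=
  add_pos_of_pos_of_nonneg one_pos (mul_nonneg hc (hA.eigenvalues_nonneg i))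

lemma log_re_det_one_add_smul {T : Matrix n n ℂ} (hT : T.PosSemidef) {c : ℝ} (hc : 0 ≤ c) :
    log ((1 + (c : ℂ) • T).det.re) = ∑ i, log (1 + c * hT.1.eigenvalues i) := by
  rw [Complex.coe_smul, hT.1.det_one_add_smul]
  -- `RCLike.ofReal` on `ℂ` is `Complex.ofReal` only up to unfolding, so `rw` cannot close this.
  exact log_prod fun i _ ↦ (hT.one_add_mul_eigenvalues_pos hc i).ne'

end Matrix.PosSemidef

lemma FixedPointEq.natCast_mul_eq_sum {NT : ℕ} {T : Matrix (Fin NT) (Fin NT) ℂ}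
    (hT : T.PosSemidef) {ρ δ : ℝ} {NS : ℕ} (hρδ : 0 ≤ ρ / (1 + ρ * δ)) (hNS : NS ≠ 0)
    (h : FixedPointEq T ρ NS δ) :
    NS * δ = ∑ i, hT.1.eigenvalues i / (1 + ρ / (1 + ρ * δ) * hT.1.eigenvalues i) := by
  rw [FixedPointEq, Complex.coe_smul, hT.1.trace_mul_inv_one_add_smul _
    fun i ↦ (hT.one_add_mul_eigenvalues_pos hρδ i).ne'] at h
  rw [← Complex.ofReal_inj, Complex.ofReal_mul, h, Complex.ofReal_natCast,
    mul_inv_cancel_left₀ (Nat.cast_ne_zero.2 hNS)]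
  rfl

lemma Real.div_one_add_le_log_one_add {x : ℝ} (hx : -1 < x) : x / (1 + x) ≤ log (1 + x) := by
  have hx' : 1 + x ≠ 0 := by linarith
  calc x / (1 + x) = 1 - (1 + x)⁻¹ := by field_simp; ring
    _ ≤ log (1 + x) := one_sub_inv_le_log_of_pos (by linarith)

lemma Real.log_one_add_mul_le {a p x : ℝ} (ha : 0 ≤ a) (hp : 1 ≤ p) (hx : 0 ≤ x) :
    log (1 + a * x) ≤ log (1 + a / p * x) + log p := by
  have hp0 : 0 < p := by linarith
  rw [← log_mul (by positivity) hp0.ne']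
  apply log_le_log (by positivity)
  rw [add_mul, one_mul, mul_right_comm, div_mul_cancel₀ a hp0.ne']
  linarith

section Eigenvalues

variable {ι : Type*} [Fintype ι] {e : ι → ℝ}

lemma sum_log_one_add_mul_le (he : ∀ i, 0 ≤ e i) {a p : ℝ} (ha : 0 ≤ a) (hp : 1 ≤ p) :
    ∑ i, log (1 + a * e i) ≤ ∑ i, log (1 + a / p * e i) + #{i | e i ≠ 0} * log p := by
  have hterm (i : ι) :
      log (1 + a * e i) ≤ log (1 + a / p * e i) + if e i ≠ 0 then log p else 0 := by
    by_cases h : e i = 0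
    · simp [h]
    · simpa [h] using log_one_add_mul_le ha hp (he i)
  calc ∑ i, log (1 + a * e i)
      ≤ ∑ i, (log (1 + a / p * e i) + if e i ≠ 0 then log p else 0) :=
        sum_le_sum fun i _ ↦ hterm i
    _ = _ := by rw [sum_add_distrib, ← sum_filter, sum_const, nsmul_eq_mul]

lemma sum_div_one_add_le_sum_log (he : ∀ i, 0 ≤ e i) {c : ℝ} (hc : 0 ≤ c) :
    ∑ i, c * e i / (1 + c * e i) ≤ ∑ i, log (1 + c * e i) :=
  sum_le_sum fun i _ ↦ div_one_add_le_log_one_add (by nlinarith [he i])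

theorem rhoBar_lower_bound_of_eigenvalues (he : ∀ i, 0 ≤ e i) {lam δ N : ℝ} (hlam : 0 ≤ lam)
    (hδ : 0 ≤ δ) (hN : 0 < N) (hrN : #{i | e i ≠ 0} ≤ N)
    (hfix : N * δ = ∑ i, e i / (1 + lam / (1 + lam * δ) * e i)) :
    (N - #{i | e i ≠ 0}) / N * ∑ i, log (1 + lam * e i) ≤
      ∑ i, log (1 + lam / (1 + lam * δ) * e i) + N * log (1 + lam * δ)
        - N * (lam * δ / (1 + lam * δ)) := by
  set p := 1 + lam * δ
  set μ := lam / p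
  set r : ℝ := ((#{i | e i ≠ 0} : ℕ) : ℝ)
  set q := lam * δ / p
  have hp : 1 ≤ p := le_add_of_nonneg_right (mul_nonneg hlam hδ)
  have hμ : 0 ≤ μ := by positivity
  have hr : 0 ≤ r := by positivity
  have hsupp : ∑ i, log (1 + lam * e i) ≤ ∑ i, log (1 + μ * e i) + r * log p :=
    sum_log_one_add_mul_le he hlam hp
  have hNq : N * q = ∑ i, μ * e i / (1 + μ * e i) := by
    rw [show N * q = μ * (N * δ) by ring, hfix, mul_sum]
    simp only [mul_div_assoc]
  have hNq_le : N * q ≤ ∑ i, log (1 + μ * e i) := hNq ▸ sum_div_one_add_le_sum_log he hμ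
  have hq : q ≤ log p := div_one_add_le_log_one_add (by nlinarith)
  have hlp : 0 ≤ log p := log_nonneg hp
  rw [div_mul_eq_mul_div, div_le_iff₀ hN]
  linarith [mul_le_mul_of_nonneg_left hsupp (sub_nonneg.2 hrN),
    mul_le_mul_of_nonneg_left hNq_le hr,
    mul_nonneg (mul_nonneg hN.le (sub_nonneg.2 hrN)) (sub_nonneg.2 hq),
    mul_nonneg (mul_nonneg hr hr) hlp]

end Eigenvalues

/-- **Per-eigenvalue lower bound** (eq. (21), the key step of Proposition 2):
`ρ̄(λ,T,N_S,δ) ≥ ((N_S − r)/N_S)·log det(I + λT)` with `r = rank T`. -/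
theorem rhoBar_lower_bound {NT : ℕ} (T : Matrix (Fin NT) (Fin NT) ℂ) (hT : T.PosSemidef)
    (lam : ℝ) (hlam : 0 < lam) (NS : ℕ) (hNS1 : 1 ≤ NS) (hNSr : T.rank ≤ NS)
    (δ : ℝ) (hδ : 0 ≤ δ) (hfix : FixedPointEq T lam NS δ) :
    rhoBar lam T NS δ ≥
      (((NS : ℝ) - (T.rank : ℝ)) / (NS : ℝ)) *
        Real.log ((1 + ((lam : ℝ) : ℂ) • T).det.re) := by
  have hrank : T.rank = #{i | hT.1.eigenvalues i ≠ 0} := by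
    rw [hT.1.rank_eq_card_non_zero_eigs, Fintype.card_subtype]
  have hμ : 0 ≤ lam / (1 + lam * δ) := by positivity
  rw [rhoBar, hT.log_re_det_one_add_smul hμ, hT.log_re_det_one_add_smul hlam.le, hrank, ge_iff_le]
  exact rhoBar_lower_bound_of_eigenvalues hT.eigenvalues_nonneg hlam.le hδ
    (by exact_mod_cast hNS1) (by exact_mod_cast hrank ▸ hNSr)
    (hfix.natCast_mul_eq_sum hT hμ (by omega))
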